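/- In the ring A = Z_3[[a_1, b_1, a_2, b_2]]/(a_1 b_1 - 3, a_2 b_2 - 3) with maximal ideal m, the images of a_1 and a_2 in m/m^2 are linearly independent over the residue field F_3; equivalently, for integers c, d, if c*a_1 + d*a_2 lies in m^2 then 3 divides c and 3 divides d. -/

import Mathlib

/-! The ring `A = ℤ₃[[a₁, b₁, a₂, b₂]] / (a₁b₁ - 3, a₂b₂ - 3)`, where `ℤ₃ = ℤ_[3]` is the
ring of 3-adic integers: the completed local ring of the family of compactified jacobians
at the point `[I]`, `I = ν⁎𝒪(-2)`, in Kass's example. -/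

/-- The formal power series ring `ℤ₃[[a₁, b₁, a₂, b₂]]` in four variables over the
3-adic integers. -/
abbrev B : Type := MvPowerSeries (Fin 4) ℤ_[3]

/-- The ideal `(a₁b₁ - 3, a₂b₂ - 3)` of `ℤ₃[[a₁, b₁, a₂, b₂]]`, where `a₁, b₁, a₂, b₂`
are the four variables. -/
noncomputable abbrev relIdeal : Ideal B :=
  Ideal.span {MvPowerSeries.X 0 * MvPowerSeries.X 1 - 3,
    MvPowerSeries.X 2 * MvPowerSeries.X 3 - 3}

/-- The ring `A = ℤ₃[[a₁, b₁, a₂, b₂]] / (a₁b₁ - 3, a₂b₂ - 3)`. -/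
abbrev A : Type := B ⧸ relIdeal

/-- The image `a₁` in `A` of the first variable. -/
noncomputable def a1 : A := Ideal.Quotient.mk relIdeal (MvPowerSeries.X 0)

/-- The image `b₁` in `A` of the second variable. -/
noncomputable def b1 : A := Ideal.Quotient.mk relIdeal (MvPowerSeries.X 1)

/-- The image `a₂` in `A` of the third variable. -/
noncomputable def a2 : A := Ideal.Quotient.mk relIdeal (MvPowerSeries.X 2)

/-- The image `b₂` in `A` of the fourth variable. -/
noncomputable def b2 : A := Ideal.Quotient.mk relIdeal (MvPowerSeries.X 3)

/-- The maximal ideal `m = (3, a₁, b₁, a₂, b₂)` of `A`. -/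
noncomputable def m : Ideal A := Ideal.span {(3 : A), a1, b1, a2, b2}

/-! For a variable `X_i`, taking the constant coefficient and the `X_i`-coefficient of a power
series, both reduced mod 3, is a ring map to the dual numbers `𝔽₃[ε]`. It kills `3` and every
product `X_j X_k`, hence the relations, and it sends `m` into `(ε)`, whose square is zero; so it
vanishes on `m²`. The maps for `a₁` and `a₂` send `c a₁ + d a₂` to `c ε` and `d ε`. -/

open DualNumber TrivSqZeroExt

namespace MvPowerSeries

variable {σ R : Type*} [CommSemiring R]

theorem coeff_single_one_mul (i : σ) (f g : MvPowerSeries σ R) :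
    coeff (Finsupp.single i 1) (f * g) =
      constantCoeff f * coeff (Finsupp.single i 1) g +
        coeff (Finsupp.single i 1) f * constantCoeff g := by
  classical
  rw [coeff_mul, Finsupp.antidiagonal_single, Finset.sum_map,
    show (Finset.HasAntidiagonal.antidiagonal 1 : Finset (ℕ × ℕ)) = {(0, 1), (1, 0)} from rfl]
  simp

noncomputable def firstOrderJet (i : σ) : MvPowerSeries σ R →+* R[ε] where
  toFun f := inl (constantCoeff f) + inr (coeff (Finsupp.single i 1) f)
  map_one' := by classical ext <;> simp [coeff_one]
  map_mul' f g := by ext <;> simp [coeff_single_one_mul, mul_comm]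
  map_zero' := by ext <;> simp
  map_add' f g := by ext <;> simp

@[simp]
theorem fst_firstOrderJet (i : σ) (f : MvPowerSeries σ R) :
    (firstOrderJet i f).fst = constantCoeff f := by simp [firstOrderJet]

@[simp]
theorem snd_firstOrderJet (i : σ) (f : MvPowerSeries σ R) :
    (firstOrderJet i f).snd = coeff (Finsupp.single i 1) f := by simp [firstOrderJet]

theorem firstOrderJet_X [DecidableEq σ] (i j : σ) :
    firstOrderJet i (X j : MvPowerSeries σ R) = if i = j then ε else 0 := by
  ext
  · split_ifs <;> simp
  · split_ifs with h
    · simp [h]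
    · simp [coeff_X, Finsupp.single_left_inj one_ne_zero, h]

theorem firstOrderJet_X_mul_X [DecidableEq σ] (i j k : σ) :
    firstOrderJet i (X j * X k : MvPowerSeries σ R) = 0 := by
  rw [map_mul, firstOrderJet_X, firstOrderJet_X]
  split_ifs <;> simp [eps_mul_eps]

end MvPowerSeries

theorem Ideal.sq_le_ker_of_map_le {R S : Type*} [CommSemiring R] [CommSemiring S] (f : R →+* S)
    {I : Ideal R} {J : Ideal S} (hIJ : I.map f ≤ J) (hJ : J ^ 2 = ⊥) :
    I ^ 2 ≤ RingHom.ker f := by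
  rw [← Ideal.map_eq_bot_iff_le_ker, Ideal.map_pow, ← le_bot_iff, ← hJ]
  exact Ideal.pow_right_mono hIJ 2

namespace DualNumber

theorem span_eps_sq {R : Type*} [CommSemiring R] : (Ideal.span {ε} : Ideal R[ε]) ^ 2 = ⊥ := by
  rw [Ideal.span_singleton_pow, eps_pow_two, Ideal.span_singleton_eq_bot]

theorem intCast_mul_eps_eq_zero_iff (n : ℕ) (c : ℤ) :
    (c : (ZMod n)[ε]) * ε = 0 ↔ (n : ℤ) ∣ c := by
  rw [← ZMod.intCast_zmod_eq_zero_iff_dvd, ← inl_intCast, inl_mul_eq_smul, ← inr_eq_smul_eps]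
  exact inr_injective.eq_iff' rfl

theorem natCast_self (n : ℕ) : (n : (ZMod n)[ε]) = 0 := by
  rw [← inl_natCast, ZMod.natCast_self, inl_zero]

theorem ofNat_three_eq_zero : (3 : (ZMod 3)[ε]) = 0 := mod_cast natCast_self 3

end DualNumber

noncomputable def jetModThree (i : Fin 4) : A →+* (ZMod 3)[ε] :=
  Ideal.Quotient.lift relIdeal
    ((MvPowerSeries.firstOrderJet i).comp (MvPowerSeries.map PadicInt.toZMod)) <| by
      intro x hx
      refine RingHom.mem_ker.1 (Ideal.span_le.2 ?_ hx)
      rintro _ (rfl | rfl) <;>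
        rw [SetLike.mem_coe, RingHom.mem_ker, RingHom.comp_apply, map_sub, map_mul,
          MvPowerSeries.map_X, MvPowerSeries.map_X, map_ofNat, map_sub, map_ofNat,
          ofNat_three_eq_zero, MvPowerSeries.firstOrderJet_X_mul_X, sub_zero]

theorem jetModThree_mk_X (i j : Fin 4) :
    jetModThree i (Ideal.Quotient.mk relIdeal (MvPowerSeries.X j)) = if i = j then ε else 0 := by
  simp [jetModThree, MvPowerSeries.firstOrderJet_X]

theorem map_m_jetModThree_le (i : Fin 4) : m.map (jetModThree i) ≤ Ideal.span {ε} := by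
  have hX (j : Fin 4) :
      jetModThree i (Ideal.Quotient.mk relIdeal (MvPowerSeries.X j)) ∈ Ideal.span {ε} := by
    rw [jetModThree_mk_X]
    split_ifs
    exacts [Ideal.mem_span_singleton_self ε, zero_mem _]
  rw [m, Ideal.map_span, Ideal.span_le]
  rintro _ ⟨y, hy, rfl⟩
  rcases hy with rfl | rfl | rfl | rfl | rfl
  · rw [map_ofNat, ofNat_three_eq_zero]; exact zero_mem _
  exacts [hX 0, hX 1, hX 2, hX 3]

theorem m_sq_le_ker_jetModThree (i : Fin 4) : m ^ 2 ≤ RingHom.ker (jetModThree i) :=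
  Ideal.sq_le_ker_of_map_le _ (map_m_jetModThree_le i) DualNumber.span_eps_sq

/-- The images of `a₁` and `a₂` in `m/m²` are linearly independent over the residue
field `𝔽₃`: for integers `c, d`, if `c·a₁ + d·a₂` lies in `m²` then `3 ∣ c` and
`3 ∣ d`. -/
theorem a1_a2_linearly_independent_in_cotangent :
    ∀ c d : ℤ, (c : A) * a1 + (d : A) * a2 ∈ m ^ 2 → (3 : ℤ) ∣ c ∧ (3 : ℤ) ∣ d := by
  intro c d h
  have hc := RingHom.mem_ker.1 (m_sq_le_ker_jetModThree 0 h)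
  have hd := RingHom.mem_ker.1 (m_sq_le_ker_jetModThree 2 h)
  simp only [a1, a2, map_add, map_mul, map_intCast, jetModThree_mk_X, Fin.reduceEq, ↓reduceIte,
    mul_zero, add_zero, zero_add] at hc hd
  exact ⟨(intCast_mul_eps_eq_zero_iff 3 c).1 hc, (intCast_mul_eps_eq_zero_iff 3 d).1 hd⟩
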